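/- Characterization of the joint right spectrum: For bounded linear operators T_1,…,T_n on a complex Hilbert space H and (λ_1,…,λ_n) ∈ ℂ^n, the following are equivalent: (i) (λ_1,…,λ_n) ∉ σ_r(T_1,…,T_n); (ii) there exists δ > 0 such that Σ_{i=1}^n (λ_i I − T_i)(conj(λ_i) I − T_i^*) ≥ δ I (i.e., the operator Σ_{i=1}^n (λ_i I − T_i)(conj(λ_i) I − T_i^*) − δ I is positive); (iii) (λ_1 I − T_1)B(H) + ⋯ + (λ_n I − T_n)B(H) = B(H), i.e., every Y ∈ B(H) can be written as Σ_{i=1}^n (λ_i I − T_i)X_i with X_1,…,X_n ∈ B(H). -/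

import Mathlib

noncomputable section

open ContinuousLinearMap RCLike


namespace RightSpecAux

variable {H : Type*} [NormedAddCommGroup H] [InnerProductSpace ℂ H] [CompleteSpace H]

lemma re_inner_sub_smul (S : H →L[ℂ] H) (δ : ℝ) (x : H) :
    (S - δ • 1).reApplyInnerSelf x = re (inner ℂ (S x) (x) : ℂ) - δ * ‖x‖ ^ 2 := by
  rw [reApplyInnerSelf_apply]
  simp only [sub_apply, smul_apply, one_apply, inner_sub_left,
    RCLike.real_smul_eq_coe_smul (K := ℂ), inner_smul_left, RCLike.conj_ofReal, map_sub]
  simp [inner_self_eq_norm_sq, ← Complex.ofReal_pow]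

lemma re_inner_sum {n : ℕ} (A : Fin n → H →L[ℂ] H) (x : H) :
    re (inner ℂ ((∑ i, A i * adjoint (A i)) x) (x) : ℂ) = ∑ i, ‖adjoint (A i) x‖ ^ 2 := by
  rw [ContinuousLinearMap.sum_apply, sum_inner, map_sum]
  congr 1
  ext i
  rw [ContinuousLinearMap.mul_apply, ← adjoint_inner_right, inner_self_eq_norm_sq]

lemma isSelfAdjoint_sum {n : ℕ} (A : Fin n → H →L[ℂ] H) :
    IsSelfAdjoint (∑ i, A i * adjoint (A i)) := by
  refine Finset.sum_induction _ _ (fun a b => IsSelfAdjoint.add) (IsSelfAdjoint.zero _) ?_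
  intro i _
  rw [← star_eq_adjoint]
  exact IsSelfAdjoint.mul_star_self (A i)

/-- (ii) ⇒ invertibility of S, giving solvability. -/
lemma solve_of_pos {n : ℕ} (A : Fin n → H →L[ℂ] H) {δ : ℝ} (hδ : 0 < δ)
    (hpos : ((∑ i, A i * adjoint (A i)) - δ • 1).IsPositive) (Y : H →L[ℂ] H) :
    ∃ X : Fin n → H →L[ℂ] H, ∑ i, A i * X i = Y := by
  set S := ∑ i, A i * adjoint (A i) with hS
  have hunit : IsUnit S := by
    refine isUnit_of_forall_le_norm_inner_map S (c := ⟨δ, hδ.le⟩) hδ (fun x => ?_)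
    have h1 := hpos.2 x
    rw [re_inner_sub_smul, sub_nonneg] at h1
    calc ‖x‖ ^ 2 * (⟨δ, hδ.le⟩ : NNReal) = δ * ‖x‖ ^ 2 := by push_cast; ring
    _ ≤ re (inner ℂ (S x) (x) : ℂ) := h1
    _ ≤ ‖(inner ℂ (S x) (x) : ℂ)‖ := RCLike.re_le_norm _
  obtain ⟨u, hu⟩ := hunit
  refine ⟨fun i => adjoint (A i) * (↑u⁻¹ * Y), ?_⟩
  have : ∑ i, A i * (adjoint (A i) * (↑u⁻¹ * Y)) = S * (↑u⁻¹ * Y) := by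
    rw [hS, Finset.sum_mul]
    simp [mul_assoc]
  rw [this, ← hu, ← mul_assoc, u.mul_inv, one_mul]

set_option maxHeartbeats 1000000 in
/-- (i) ⇒ (ii). -/
lemma pos_of_solve {n : ℕ} (A : Fin n → H →L[ℂ] H) (X : Fin n → H →L[ℂ] H)
    (hX : ∑ i, A i * X i = 1) :
    ∃ δ : ℝ, 0 < δ ∧ ((∑ i, A i * adjoint (A i)) - δ • 1).IsPositive := by
  set M : ℝ := 1 + ∑ i, ‖X i‖ with hM
  have hM1 : (1:ℝ) ≤ M := by
    have : (0:ℝ) ≤ ∑ i, ‖X i‖ := Finset.sum_nonneg fun i _ => norm_nonneg _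
    linarith
  have hMi : ∀ i, ‖X i‖ ≤ M := by
    intro i
    have : ‖X i‖ ≤ ∑ j, ‖X j‖ :=
      Finset.single_le_sum (f := fun j => ‖X j‖) (fun j _ => norm_nonneg _) (Finset.mem_univ i)
    linarith
  refine ⟨1 / (M ^ 2 * (n + 1)), by positivity, (isSelfAdjoint_sum A |>.sub (by rw [IsSelfAdjoint, star_smul, star_one, star_trivial])).isSymmetric, fun x => ?_⟩
  rw [re_inner_sub_smul, sub_nonneg, re_inner_sum]
  -- key estimate
  have key : ‖x‖ ^ 2 ≤ M * ‖x‖ * ∑ i, ‖adjoint (A i) x‖ := by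
    have h1 : (‖x‖ : ℝ) ^ 2 = re (inner ℂ ((∑ i, A i * X i) x) (x) : ℂ) := by
      rw [hX]; simp [inner_self_eq_norm_sq, ← Complex.ofReal_pow]
    rw [h1, ContinuousLinearMap.sum_apply, sum_inner, map_sum, Finset.mul_sum]
    refine Finset.sum_le_sum fun i _ => ?_
    have h2 : (inner ℂ ((A i * X i) x) (x) : ℂ) = (inner ℂ (X i x) (adjoint (A i) x) : ℂ) := by
      rw [ContinuousLinearMap.mul_apply, ← adjoint_inner_right]
    rw [h2]
    calc re (inner ℂ (X i x) (adjoint (A i) x) : ℂ) ≤ ‖(inner ℂ (X i x) (adjoint (A i) x) : ℂ)‖ := RCLike.re_le_norm _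
    _ ≤ ‖X i x‖ * ‖adjoint (A i) x‖ := norm_inner_le_norm _ _
    _ ≤ (M * ‖x‖) * ‖adjoint (A i) x‖ := by
        refine mul_le_mul_of_nonneg_right ?_ (norm_nonneg _)
        calc ‖X i x‖ ≤ ‖X i‖ * ‖x‖ := le_opNorm _ _
        _ ≤ M * ‖x‖ := mul_le_mul_of_nonneg_right (hMi i) (norm_nonneg _)
  have cs : (∑ i, ‖adjoint (A i) x‖) ^ 2 ≤ n * ∑ i, ‖adjoint (A i) x‖ ^ 2 := by
    simpa using sq_sum_le_card_mul_sum_sq (s := (Finset.univ : Finset (Fin n)))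
      (f := fun i => ‖adjoint (A i) x‖)
  set Q : ℝ := ∑ i, ‖adjoint (A i) x‖ ^ 2 with hQ
  have hQ0 : 0 ≤ Q := Finset.sum_nonneg fun i _ => sq_nonneg _
  rcases eq_or_ne x 0 with rfl | hx
  · simpa using hQ0
  have hxn : 0 < ‖x‖ := norm_pos_iff.mpr hx
  have hP0 : 0 ≤ ∑ i, ‖adjoint (A i) x‖ := Finset.sum_nonneg fun i _ => norm_nonneg _
  -- ‖x‖^4 ≤ M^2 ‖x‖^2 (∑)^2 ≤ M^2 (n+1) ‖x‖^2 Q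
  have h4 : ‖x‖ ^ 4 ≤ M ^ 2 * (n + 1) * ‖x‖ ^ 2 * Q := by
    have s1 : ‖x‖ ^ 4 ≤ (M * ‖x‖) ^ 2 * (∑ i, ‖adjoint (A i) x‖) ^ 2 := by
      calc ‖x‖ ^ 4 = (‖x‖ ^ 2) ^ 2 := by ring
      _ ≤ (M * ‖x‖ * ∑ i, ‖adjoint (A i) x‖) ^ 2 := by
          apply pow_le_pow_left₀ (by positivity) key
      _ = (M * ‖x‖) ^ 2 * (∑ i, ‖adjoint (A i) x‖) ^ 2 := by ring
    have s2 : (∑ i, ‖adjoint (A i) x‖) ^ 2 ≤ (n + 1) * Q := by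
      refine cs.trans ?_
      have : (n : ℝ) ≤ n + 1 := by linarith
      exact mul_le_mul_of_nonneg_right this hQ0
    calc ‖x‖ ^ 4 ≤ (M * ‖x‖) ^ 2 * (∑ i, ‖adjoint (A i) x‖) ^ 2 := s1
    _ ≤ (M * ‖x‖) ^ 2 * ((n + 1) * Q) := by
        exact mul_le_mul_of_nonneg_left s2 (by positivity)
    _ = M ^ 2 * (n + 1) * ‖x‖ ^ 2 * Q := by ring
  have hMn : (0:ℝ) < M ^ 2 * (n + 1) := by positivity
  rw [div_mul_eq_mul_div, one_mul, div_le_iff₀ hMn]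
  have h5 : ‖x‖ ^ 2 * ‖x‖ ^ 2 ≤ (Q * (M ^ 2 * (n + 1))) * ‖x‖ ^ 2 := by
    calc ‖x‖ ^ 2 * ‖x‖ ^ 2 = ‖x‖ ^ 4 := by ring
    _ ≤ M ^ 2 * (n + 1) * ‖x‖ ^ 2 * Q := h4
    _ = (Q * (M ^ 2 * (n + 1))) * ‖x‖ ^ 2 := by ring
  exact le_of_mul_le_mul_right h5 (pow_pos hxn 2)

end RightSpecAux

/-- The joint right spectrum: `λ ∈ σ_r(T)` iff there are no `X_1,…,X_n` with
`∑ (λ_i I - T_i) X_i = I`. -/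
def rightSpectrum {H : Type*} [NormedAddCommGroup H] [InnerProductSpace ℂ H]
    {n : ℕ} (T : Fin n → H →L[ℂ] H) : Set (Fin n → ℂ) :=
  {l | ¬ ∃ X : Fin n → H →L[ℂ] H, ∑ i, (l i • 1 - T i) * X i = 1}

/-- Characterization of the joint right spectrum: `λ ∉ σ_r(T)` iff
`∑ (λ_i I - T_i)(conj(λ_i) I - T_i^*) ≥ δ I` for some `δ > 0`, iff
`(λ_1 I - T_1)B(H) + ⋯ + (λ_n I - T_n)B(H) = B(H)`. -/
theorem rightSpectrum_characterization {H : Type*} [NormedAddCommGroup H]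
    [InnerProductSpace ℂ H] [CompleteSpace H] {n : ℕ} (T : Fin n → H →L[ℂ] H)
    (l : Fin n → ℂ) :
    (l ∉ rightSpectrum T ↔
      ∃ δ : ℝ, 0 < δ ∧
        (∑ i, (l i • 1 - T i) *
            ((starRingEnd ℂ (l i)) • 1 - ContinuousLinearMap.adjoint (T i)) -
          δ • (1 : H →L[ℂ] H)).IsPositive) ∧
    (l ∉ rightSpectrum T ↔
      ∀ Y : H →L[ℂ] H, ∃ X : Fin n → H →L[ℂ] H, ∑ i, (l i • 1 - T i) * X i = Y) := by
  set A : Fin n → H →L[ℂ] H := fun i => l i • 1 - T i with hA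
  have hadj : ∀ i, ((starRingEnd ℂ (l i)) • 1 - ContinuousLinearMap.adjoint (T i))
      = ContinuousLinearMap.adjoint (A i) := by
    intro i
    rw [hA, ← ContinuousLinearMap.star_eq_adjoint, ← ContinuousLinearMap.star_eq_adjoint,
      star_sub, star_smul, star_one]
    rfl
  have hmem : l ∉ rightSpectrum T ↔ ∃ X : Fin n → H →L[ℂ] H, ∑ i, A i * X i = 1 := by
    simp [rightSpectrum, hA]
  constructor
  · rw [hmem]
    simp only [hadj]
    constructor
    · rintro ⟨X, hX⟩
      exact RightSpecAux.pos_of_solve A X hX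
    · rintro ⟨δ, hδ, hpos⟩
      exact RightSpecAux.solve_of_pos A hδ hpos 1
  · rw [hmem]
    constructor
    · rintro ⟨X, hX⟩ Y
      refine ⟨fun i => X i * Y, ?_⟩
      rw [show ∑ i, A i * (X i * Y) = (∑ i, A i * X i) * Y by rw [Finset.sum_mul]; simp [mul_assoc],
        hX, one_mul]
    · intro h
      exact h 1
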